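/- arXiv:1308.1970 — 3 statements merged into one kernel-verified Lean document; each statement's English description precedes it below -/
import Mathlib

section
/- Let K be a totally real number field of degree g over ℚ with real embeddings σ₁,…,σ_g, and let I, J ⊆ {1,…,g} be disjoint subsets. Then there exist elements η, β in the ring of integers O_K such that: (1) σ_k(η) < 0 for k ∈ I and σ_k(η) > 0 for k ∉ I; (2) σ_k(β) < 0 for k ∈ J and σ_k(β) > 0 for k ∉ J; and (3) σ_k(η) + σ_k(β) < 0 for all k ∈ I ∪ J. -/
/-!
By Artin's independence of characters the embeddings `σ k` are linearly independent over `ℝ`,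
so the image of `K` in `ℝ^g` spans `ℝ^g`; being a `ℚ`-subspace, it is then dense. The sign
conditions cut out a nonempty open cone in `ℝ^g × ℝ^g`, which therefore contains the image of
some pair `(x, y) ∈ K × K`; a common positive integer multiple clearing the denominators of `x`
and `y` stays in the cone.
-/

open NumberField

theorem span_range_eval_eq_top_of_injective {M L ι : Type*} [Monoid M] [Field L] [Fintype ι]
    (σ : ι → M →* L) (hσ : Function.Injective σ) :
    Submodule.span L (Set.range fun x k => σ k x) = ⊤ := by
  classical
  rw [← Submodule.dualAnnihilator_eq_bot_iff, eq_bot_iff]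
  intro f hf
  set c : ι → L := fun k => f fun j => if k = j then 1 else 0
  have hcoord : ∀ v, f v = ∑ k, v k * c k := fun v => by
    simpa using LinearMap.pi_apply_eq_sum_univ f v
  have hrel : ∑ k, c k • ⇑(σ k) = 0 := by
    funext x
    have := (Submodule.mem_dualAnnihilator f).mp hf _ (Submodule.subset_span ⟨x, rfl⟩)
    rw [hcoord] at this
    simpa [mul_comm] using this
  have hc := Fintype.linearIndependent_iff.mp ((linearIndependent_monoidHom M L).comp σ hσ) c hrel
  ext v
  simp [hcoord, hc]

theorem Submodule.dense_of_span_real_eq_top {E : Type*} [NormedAddCommGroup E] [NormedSpace ℝ E]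
    [FiniteDimensional ℝ E] [Module ℚ E] [IsScalarTower ℚ ℝ E] (A : Submodule ℚ E)
    (hA : Submodule.span ℝ (A : Set E) = ⊤) : Dense (A : Set E) := by
  obtain ⟨s, hsA, hspan, hli⟩ := exists_linearIndependent ℝ (A : Set E)
  let b : Module.Basis s ℝ E := .mk hli (by simp [hspan, hA])
  have : Fintype s := @Fintype.ofFinite _ (Module.Finite.finite_basis b)
  let f := b.equivFun.symm.toContinuousLinearEquiv
  have hdense : DenseRange (f ∘ Pi.map fun _ (q : ℚ) => (q : ℝ)) :=
    f.surjective.denseRange.comp (.piMap fun _ => Rat.denseRange_cast) f.continuous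
  refine hdense.mono ?_
  rintro _ ⟨c, rfl⟩
  have : (f ∘ Pi.map fun _ (q : ℚ) => (q : ℝ)) c = ∑ i, c i • (i : E) := by
    simp [f, b, Module.Basis.equivFun_symm_apply, Rat.cast_smul_eq_qsmul]
  rw [this]
  exact A.sum_mem fun i _ => A.smul_mem _ (hsA i.2)

theorem RingHom.denseRange_pi_of_injective {K ι : Type*} [Field K] [CharZero K] [Fintype ι]
    (σ : ι → K →+* ℝ) (hσ : Function.Injective σ) : DenseRange (RingHom.pi σ) := by
  let A := LinearMap.range (RingHom.pi σ).toRatAlgHom.toLinearMap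
  have hA : (A : Set (ι → ℝ)) = Set.range (RingHom.pi σ) := LinearMap.coe_range _
  have hspan : Submodule.span ℝ (A : Set (ι → ℝ)) = ⊤ := by
    rw [hA]
    exact span_range_eval_eq_top_of_injective (fun k => (σ k : K →* ℝ))
      (fun j k h => hσ (RingHom.ext fun x => DFunLike.congr_fun h x))
  rw [DenseRange, ← hA]
  exact A.dense_of_span_real_eq_top hspan

theorem exists_pos_int_smul_isIntegral {A : Type*} [CommRing A] [Algebra.IsAlgebraic ℤ A]
    (s : Finset A) : ∃ n : ℤ, 0 < n ∧ ∀ z ∈ s, IsIntegral ℤ (n • z) := by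
  obtain ⟨n, hn, hint⟩ := Algebra.IsAlgebraic.exists_integral_multiples ℤ s
  refine ⟨n * n, mul_self_pos.mpr hn, fun z hz => ?_⟩
  rw [mul_smul]
  exact (hint z hz).smul n

section SignPattern

variable {ι : Type*} [DecidableEq ι] (I J : Finset ι)

def SignPattern (a b : ι → ℝ) : Prop :=
  (∀ k ∈ I, a k < 0) ∧ (∀ k ∉ I, 0 < a k) ∧ (∀ k ∈ J, b k < 0) ∧ (∀ k ∉ J, 0 < b k) ∧
    ∀ k ∈ I ∪ J, a k + b k < 0

variable {I J}

theorem SignPattern.smul {a b : ι → ℝ} (h : SignPattern I J a b) {c : ℝ} (hc : 0 < c) :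
    SignPattern I J (c • a) (c • b) := by
  obtain ⟨ha, ha', hb, hb', hab⟩ := h
  refine ⟨fun k hk => ?_, fun k hk => ?_, fun k hk => ?_, fun k hk => ?_, fun k hk => ?_⟩
  · exact mul_neg_of_pos_of_neg hc (ha k hk)
  · exact mul_pos hc (ha' k hk)
  · exact mul_neg_of_pos_of_neg hc (hb k hk)
  · exact mul_pos hc (hb' k hk)
  · simpa [← mul_add] using mul_neg_of_pos_of_neg hc (hab k hk)

theorem isOpen_setOf_signPattern [Finite ι] :
    IsOpen {p : (ι → ℝ) × (ι → ℝ) | SignPattern I J p.1 p.2} := by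
  simp only [SignPattern, Set.ofPred_and, Set.ofPred_forall]
  repeat' apply IsOpen.inter
  all_goals exact isOpen_iInter_of_finite fun k => isOpen_iInter_of_finite fun _ =>
    isOpen_lt (by fun_prop) (by fun_prop)

theorem signPattern_ite (hIJ : Disjoint I J) :
    SignPattern I J (fun k => if k ∈ I then -2 else 1) (fun k => if k ∈ J then -2 else 1) := by
  refine ⟨fun k hk => by simp [hk], fun k hk => by simp [hk], fun k hk => by simp [hk],
    fun k hk => by simp [hk], fun k hk => ?_⟩
  rcases Finset.mem_union.mp hk with hI | hJ
  · simp [hI, Finset.disjoint_left.mp hIJ hI]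
  · simp [hJ, Finset.disjoint_right.mp hIJ hJ]

end SignPattern

theorem stmt0_general (K : Type*) [Field K] [NumberField K] (g : ℕ)
    (σ : Fin g → (K →+* ℝ)) (hσ : Function.Bijective σ)
    (I J : Finset (Fin g)) (hIJ : Disjoint I J) :
    ∃ η β : 𝓞 K,
      (∀ k, k ∈ I → σ k (η : K) < 0) ∧
      (∀ k, k ∉ I → 0 < σ k (η : K)) ∧
      (∀ k, k ∈ J → σ k (β : K) < 0) ∧
      (∀ k, k ∉ J → 0 < σ k (β : K)) ∧
      (∀ k, k ∈ I ∪ J → σ k (η : K) + σ k (β : K) < 0) := by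
  classical
  have hdense := RingHom.denseRange_pi_of_injective σ hσ.injective
  obtain ⟨⟨x, y⟩, hxy⟩ := (hdense.prodMap hdense).exists_mem_open isOpen_setOf_signPattern
    ⟨(_, _), signPattern_ite hIJ⟩
  have : Algebra.IsAlgebraic ℤ K :=
    IsFractionRing.comap_isAlgebraic_iff (K := ℚ).mpr inferInstance
  obtain ⟨n, hn, hint⟩ := exists_pos_int_smul_isIntegral {x, y}
  have hscaled := SignPattern.smul hxy (Int.cast_pos.mpr hn : (0 : ℝ) < n)
  refine ⟨⟨n • x, hint x (by simp)⟩, ⟨n • y, hint y (by simp)⟩, ?_⟩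
  simpa [SignPattern, map_zsmul] using hscaled

/-- For a totally real number field `K` of degree `g` over `ℚ`, with real embeddings
`σ 0, …, σ (g-1)`, and disjoint subsets `I, J ⊆ {0,…,g-1}`, there exist algebraic integers
`η, β ∈ 𝓞 K` with the prescribed sign patterns at each embedding. -/
theorem stmt0 (K : Type*) [Field K] [NumberField K] (g : ℕ)
    (hdeg : Module.finrank ℚ K = g)
    (σ : Fin g → (K →+* ℝ)) (hσ : Function.Bijective σ)
    (I J : Finset (Fin g)) (hIJ : Disjoint I J) :
    ∃ η β : 𝓞 K,
      (∀ k, k ∈ I → σ k (η : K) < 0) ∧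
      (∀ k, k ∉ I → 0 < σ k (η : K)) ∧
      (∀ k, k ∈ J → σ k (β : K) < 0) ∧
      (∀ k, k ∉ J → 0 < σ k (β : K)) ∧
      (∀ k, k ∈ I ∪ J → σ k (η : K) + σ k (β : K) < 0) :=
  stmt0_general K g σ hσ I J hIJ
end

section
/- Let K be a totally real number field of degree e over ℚ with real embeddings σ₁,…,σ_e. For any nonnegative integers ℓ, k with ℓ ≤ e and k ≤ e, there exist elements η, γ ∈ K such that η has exactly ℓ negative conjugates (i.e. #{i : σ_i(η) < 0} = ℓ), γ has exactly k negative conjugates, and η + γ has exactly ℓ + k negative conjugates. -/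
/-!
Since the embeddings are distinct characters, Dedekind's lemma makes the matrix `(σ i (b j))` of a
`ℚ`-basis `b` invertible, so `K` is dense in `ℝ^e` under `x ↦ (σ i x)ᵢ`. Hence one may pick `η`
with `σ i η < -1` on a set `A` of `ℓ` indices and `σ i η ∈ (0, 1)` elsewhere, and `γ` likewise
for a set `B` of `k` indices disjoint from `A`; then `η + γ` is negative exactly on `A ∪ B`.
-/

section Embeddings

variable {K ι : Type*} [Field K] [CharZero K] [Fintype ι] [DecidableEq ι]

/-- Dedekind's independence of characters, transported to the rows `j ↦ σ i (b j)` through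
the ℝ-linear map sending a row `r` to `x ↦ ∑ j, b.repr x j * r j`, which recovers `σ i`. -/
theorem isUnit_ringHom_apply_basis (b : Module.Basis ι ℚ K) {σ : ι → K →+* ℝ}
    (hσ : Function.Injective σ) : IsUnit (Matrix.of fun i j => σ i (b j)) := by
  rw [← Matrix.linearIndependent_rows_iff_isUnit]
  let extend : (ι → ℝ) →ₗ[ℝ] (K → ℝ) :=
    { toFun := fun r x => ∑ j, (b.repr x j : ℝ) * r j
      map_add' := fun r s => by ext x; simp [mul_add, Finset.sum_add_distrib]
      map_smul' := fun c r => by ext x; simp [Finset.mul_sum, mul_left_comm] }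
  refine LinearIndependent.of_comp extend ?_
  have hextend : ∀ i, extend (fun j => σ i (b j)) = σ i := fun i => by
    ext x
    conv_rhs => rw [← b.sum_repr x]
    simp [extend, map_sum, Rat.smul_def]
  have hchar : LinearIndependent ℝ fun i => ((σ i : K →* ℝ) : K → ℝ) :=
    (linearIndependent_monoidHom K ℝ).comp _ fun i j h =>
      hσ (RingHom.ext fun x => DFunLike.congr_fun h x)
  rwa [show ⇑extend ∘ (Matrix.of fun i j => σ i (b j)).row = fun i => ((σ i : K →* ℝ) : K → ℝ)
    from funext hextend]

theorem denseRange_ringHom_pi (b : Module.Basis ι ℚ K) {σ : ι → K →+* ℝ}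
    (hσ : Function.Injective σ) : DenseRange fun (x : K) i => σ i x := by
  set M : Matrix ι ι ℝ := Matrix.of fun i j => σ i (b j)
  have hsurj : Function.Surjective M.mulVec :=
    Matrix.mulVec_surjective_iff_isUnit.2 (isUnit_ringHom_apply_basis b hσ)
  have hrat : DenseRange (Pi.map fun (_ : ι) (q : ℚ) => (q : ℝ)) :=
    DenseRange.piMap fun _ => Rat.denseRange_cast
  refine Dense.mono ?_ (hsurj.denseRange.comp hrat (continuous_const.matrix_mulVec continuous_id))
  rintro _ ⟨q, rfl⟩
  refine ⟨∑ j, q j • b j, funext fun i => ?_⟩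
  simp [M, Matrix.mulVec, dotProduct, Rat.smul_def, mul_comm]

end Embeddings

section SignBox

variable {ι : Type*} [DecidableEq ι]

/-- The bounds make `x i + y i` negative as soon as one summand is `< -1` and the other lies
in `(0, 1)`. -/
def signBox (A : Finset ι) : Set (ι → ℝ) :=
  Set.univ.pi fun i => if i ∈ A then Set.Iio (-1) else Set.Ioo 0 1

theorem isOpen_signBox [Finite ι] (A : Finset ι) : IsOpen (signBox A) :=
  isOpen_set_pi Set.finite_univ fun i _ => by
    split_ifs
    exacts [isOpen_Iio, isOpen_Ioo]

theorem signBox_nonempty (A : Finset ι) : (signBox A).Nonempty :=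
  Set.univ_pi_nonempty_iff.2 fun i => by
    split_ifs
    exacts [Set.nonempty_Iio, Set.nonempty_Ioo.2 zero_lt_one]

variable {A B : Finset ι} {x y : ι → ℝ} {i : ι}

theorem lt_neg_one_of_mem_signBox (hx : x ∈ signBox A) (hi : i ∈ A) : x i < -1 := by
  simpa [hi] using hx i (Set.mem_univ i)

theorem mem_Ioo_of_mem_signBox (hx : x ∈ signBox A) (hi : i ∉ A) : x i ∈ Set.Ioo 0 1 := by
  simpa [hi] using hx i (Set.mem_univ i)

variable [Fintype ι]

theorem filter_neg_eq_of_mem_signBox (hx : x ∈ signBox A) :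
    Finset.univ.filter (fun i => x i < 0) = A := by
  ext i
  simp only [Finset.mem_filter, Finset.mem_univ, true_and]
  by_cases hi : i ∈ A
  · exact iff_of_true (by linarith [lt_neg_one_of_mem_signBox hx hi]) hi
  · exact iff_of_false (by linarith [(mem_Ioo_of_mem_signBox hx hi).1]) hi

theorem filter_add_neg_eq_of_mem_signBox (hAB : Disjoint A B)
    (hx : x ∈ signBox A) (hy : y ∈ signBox B) :
    Finset.univ.filter (fun i => x i + y i < 0) = A ∪ B := by
  ext i
  simp only [Finset.mem_filter, Finset.mem_univ, true_and, Finset.mem_union]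
  by_cases hiA : i ∈ A
  · have hiB : i ∉ B := Finset.disjoint_left.1 hAB hiA
    exact iff_of_true (by linarith [lt_neg_one_of_mem_signBox hx hiA,
      (mem_Ioo_of_mem_signBox hy hiB).2]) (.inl hiA)
  by_cases hiB : i ∈ B
  · exact iff_of_true (by linarith [lt_neg_one_of_mem_signBox hy hiB,
      (mem_Ioo_of_mem_signBox hx hiA).2]) (.inr hiB)
  · exact iff_of_false (by linarith [(mem_Ioo_of_mem_signBox hx hiA).1,
      (mem_Ioo_of_mem_signBox hy hiB).1]) (by tauto)

end SignBox

theorem stmt1_general (K : Type*) [Field K] [NumberField K] (e : ℕ)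
    (hdeg : Module.finrank ℚ K = e)
    (σ : Fin e → (K →+* ℝ)) (hσ : Function.Bijective σ)
    (ℓ k : ℕ) (hℓk : ℓ + k ≤ e) :
    ∃ η γ : K,
      (Finset.univ.filter fun i => σ i η < 0).card = ℓ ∧
      (Finset.univ.filter fun i => σ i γ < 0).card = k ∧
      (Finset.univ.filter fun i => σ i (η + γ) < 0).card = ℓ + k := by
  obtain ⟨A, -, hA⟩ := Finset.exists_subset_card_eq (s := (Finset.univ : Finset (Fin e)))
    (n := ℓ) (by rw [Finset.card_univ, Fintype.card_fin]; omega)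
  obtain ⟨B, hBA, hB⟩ := Finset.exists_subset_card_eq (s := Aᶜ) (n := k)
    (by rw [Finset.card_compl, Fintype.card_fin]; omega)
  have hAB : Disjoint A B := Finset.subset_compl_iff_disjoint_left.1 hBA
  have hdense := denseRange_ringHom_pi (Module.finBasisOfFinrankEq ℚ K hdeg) hσ.injective
  obtain ⟨η, hη⟩ := hdense.exists_mem_open (isOpen_signBox A) (signBox_nonempty A)
  obtain ⟨γ, hγ⟩ := hdense.exists_mem_open (isOpen_signBox B) (signBox_nonempty B)
  refine ⟨η, γ, ?_, ?_, ?_⟩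
  · rw [filter_neg_eq_of_mem_signBox hη, hA]
  · rw [filter_neg_eq_of_mem_signBox hγ, hB]
  · simp only [map_add]
    rw [filter_add_neg_eq_of_mem_signBox hAB hη hγ, Finset.card_union_of_disjoint hAB, hA, hB]

/-- For a totally real number field `K` of degree `e` over `ℚ`, with real embeddings
`σ 0, …, σ (e-1)`, and nonnegative integers `ℓ, k` with `ℓ + k ≤ e`, there exist
`η, γ ∈ K` having exactly `ℓ`, `k`, and `ℓ + k` negative conjugates respectively
(for `η`, `γ`, and `η + γ`). -/
theorem stmt1 (K : Type*) [Field K] [NumberField K] (e : ℕ)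
    (hdeg : Module.finrank ℚ K = e)
    (σ : Fin e → (K →+* ℝ)) (hσ : Function.Bijective σ)
    (ℓ k : ℕ) (hℓ : ℓ ≤ e) (hk : k ≤ e) (hℓk : ℓ + k ≤ e) :
    ∃ η γ : K,
      (Finset.univ.filter fun i => σ i η < 0).card = ℓ ∧
      (Finset.univ.filter fun i => σ i γ < 0).card = k ∧
      (Finset.univ.filter fun i => σ i (η + γ) < 0).card = ℓ + k :=
  stmt1_general K e hdeg σ hσ ℓ k hℓk
end

section
/- Let E be an elliptic curve, X = E × E, and let f₁, f₂, γ ∈ N¹(X) be the numerical classes of {x}×E, E×{x}, and f₁ + f₂ − Δ (Δ the diagonal), with intersection numbers f₁·f₂ = 1, f₁² = f₂² = γ·f₁ = γ·f₂ = 0, γ² = −2. Fix an integer m ≥ 3, let L be a line bundle with numerical class −m f₁ + γ and M a line bundle with numerical class f₁ − f₂. Then for every n ≥ 1: h¹(X, L^n) = n², h¹(X, M^n) = n², h²(X, L^n ⊗ M^n) = n²(m − 2); consequently, if the cup-product map H¹(X, L^n) ⊗ H¹(X, M^n) → H²(X, L^n ⊗ M^n) is surjective then n ≥ √(m − 2),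 and in particular for m ≥ 4 the map ∪(L, M) (the case n = 1) is not surjective. -/
set_option maxHeartbeats 800000


/-- An abstract model of the line bundles on the abelian surface `X = E × E` (`E` an
elliptic curve), recording tensor products, powers, cohomology dimensions, surjectivity
of the cup product `H¹ ⊗ H¹ → H²`, and the numerical class of a line bundle written in
coordinates `(a, b, c)` with respect to the basis `f₁, f₂, γ` of the relevant part of
`N¹(X)`, where `f₁ = [{x} × E]`, `f₂ = [E × {x}]`, `γ = f₁ + f₂ − Δ`, with intersection
numbers `f₁·f₂ = 1`, `f₁² = f₂² = γ·f₁ = γ·f₂ = 0`, `γ² = −2`; so a class `(a,b,c)` has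
`χ = a·b − c²`. -/
structure ExETheory where
  /-- line bundles on `X = E × E` -/
  Coh : Type*
  /-- tensor product -/
  tensor : Coh → Coh → Coh
  /-- `pow N n = N^{⊗n}` -/
  pow : Coh → ℕ → Coh
  /-- the numerical class `a·f₁ + b·f₂ + c·γ` of a line bundle, as `(a, b, c)` -/
  numClass : Coh → ℤ × ℤ × ℤ
  /-- `h i N = dim H^i(X, N)` -/
  h : ℕ → Coh → ℕ
  /-- the cup-product map `H¹(X, N) ⊗ H¹(X, N') → H²(X, N ⊗ N')` is surjective -/
  CupSurj : Coh → Coh → Prop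

/-- On `X = E × E`, fix `m ≥ 3` and line bundles `L`, `M` with numerical classes
`−m·f₁ + γ` and `f₁ − f₂`.  Then for every `n ≥ 1`: `h¹(X, Lⁿ) = n²`, `h¹(X, Mⁿ) = n²`,
`h²(X, Lⁿ ⊗ Mⁿ) = n²(m − 2)`; if the cup product `H¹(Lⁿ) ⊗ H¹(Mⁿ) → H²(Lⁿ ⊗ Mⁿ)` is
surjective then `n ≥ √(m − 2)`; and for `m ≥ 4` the map `∪(L, M)` is not surjective.
(The hypotheses record: numerical classes of powers and tensor products; that a line
bundle `N` of class `(a,b,c)` with `ab − c² < 0` has index 1 with `h¹ = |ab − c²|`, and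
with `ab − c² > 0`, `a + b < 0` has index 2 with `h² = ab − c²`; and that surjectivity
of the cup product forces `h² ≤ h¹·h¹`.) -/
theorem stmt17 (T : ExETheory) (m : ℕ) (hm : 3 ≤ m) (L M : T.Coh)
    (hLclass : T.numClass L = (-(m : ℤ), 0, 1))
    (hMclass : T.numClass M = (1, -1, 0))
    (hpow : ∀ (N : T.Coh) (n : ℕ), T.numClass (T.pow N n) =
      ((n : ℤ) * (T.numClass N).1, (n : ℤ) * (T.numClass N).2.1,
        (n : ℤ) * (T.numClass N).2.2))
    (htensor : ∀ N N' : T.Coh, T.numClass (T.tensor N N') =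
      ((T.numClass N).1 + (T.numClass N').1, (T.numClass N).2.1 + (T.numClass N').2.1,
        (T.numClass N).2.2 + (T.numClass N').2.2))
    (hindex1 : ∀ N : T.Coh,
      (T.numClass N).1 * (T.numClass N).2.1 - (T.numClass N).2.2 ^ 2 < 0 →
      T.h 1 N = ((T.numClass N).1 * (T.numClass N).2.1 - (T.numClass N).2.2 ^ 2).natAbs ∧
        T.h 0 N = 0 ∧ T.h 2 N = 0)
    (hindex2 : ∀ N : T.Coh,
      0 < (T.numClass N).1 * (T.numClass N).2.1 - (T.numClass N).2.2 ^ 2 →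
      (T.numClass N).1 + (T.numClass N).2.1 < 0 →
      T.h 2 N = ((T.numClass N).1 * (T.numClass N).2.1 - (T.numClass N).2.2 ^ 2).natAbs ∧
        T.h 0 N = 0 ∧ T.h 1 N = 0)
    (hcup : ∀ N N' : T.Coh, T.CupSurj N N' →
      T.h 2 (T.tensor N N') ≤ T.h 1 N * T.h 1 N') :
    (∀ n : ℕ, 1 ≤ n →
      T.h 1 (T.pow L n) = n ^ 2 ∧
      T.h 1 (T.pow M n) = n ^ 2 ∧
      T.h 2 (T.tensor (T.pow L n) (T.pow M n)) = n ^ 2 * (m - 2) ∧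
      (T.CupSurj (T.pow L n) (T.pow M n) → Real.sqrt ((m : ℝ) - 2) ≤ (n : ℝ))) ∧
    (4 ≤ m → ¬ T.CupSurj L M) := by
  have hm3 : (3:ℤ) ≤ m := by exact_mod_cast hm
  have hm2 : 2 ≤ m := by omega
  constructor
  · intro n hn
    have hn1 : (1:ℤ) ≤ n := by exact_mod_cast hn
    have hL := hpow L n; rw [hLclass] at hL
    have hM := hpow M n; rw [hMclass] at hM
    have hT := htensor (T.pow L n) (T.pow M n); rw [hL, hM] at hT
    have h1L := hindex1 (T.pow L n) (by rw [hL]; norm_num; nlinarith)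
    have h1M := hindex1 (T.pow M n) (by rw [hM]; norm_num; nlinarith)
    have h2T := hindex2 (T.tensor (T.pow L n) (T.pow M n))
      (by rw [hT]; norm_num; nlinarith) (by rw [hT]; norm_num; nlinarith)
    have eL : T.h 1 (T.pow L n) = n ^ 2 := by
      rw [h1L.1, hL]; dsimp only
      have : (n:ℤ) * -(m:ℤ) * ((n:ℤ) * 0) - ((n:ℤ) * 1) ^ 2 = -((n^2 : ℕ) : ℤ) := by
        push_cast; ring
      rw [this, Int.natAbs_neg, Int.natAbs_natCast]
    have eM : T.h 1 (T.pow M n) = n ^ 2 := by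
      rw [h1M.1, hM]; dsimp only
      have : (n:ℤ) * 1 * ((n:ℤ) * -1) - ((n:ℤ) * 0) ^ 2 = -((n^2 : ℕ) : ℤ) := by
        push_cast; ring
      rw [this, Int.natAbs_neg, Int.natAbs_natCast]
    have eT : T.h 2 (T.tensor (T.pow L n) (T.pow M n)) = n ^ 2 * (m - 2) := by
      rw [h2T.1, hT]; dsimp only
      have : ((n:ℤ) * -(m:ℤ) + (n:ℤ) * 1) * ((n:ℤ) * 0 + (n:ℤ) * -1) -
          ((n:ℤ) * 1 + (n:ℤ) * 0) ^ 2 = ((n^2 * (m - 2) : ℕ) : ℤ) := by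
        push_cast [Nat.cast_sub hm2]; ring
      rw [this, Int.natAbs_natCast]
    refine ⟨eL, eM, eT, fun hcs => ?_⟩
    have hle := hcup _ _ hcs
    rw [eL, eM, eT] at hle
    have hn2 : 1 ≤ n ^ 2 := Nat.one_le_pow _ _ (by omega)
    have hkey : m - 2 ≤ n ^ 2 := by
      by_contra hc
      push_neg at hc
      nlinarith
    have hkeyR : (m:ℝ) - 2 ≤ (n:ℝ) ^ 2 := by
      have := (Nat.cast_le (α := ℝ)).2 hkey
      push_cast [Nat.cast_sub hm2] at this
      linarith
    calc Real.sqrt ((m:ℝ) - 2) ≤ Real.sqrt ((n:ℝ)^2) := Real.sqrt_le_sqrt hkeyR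
      _ = n := by rw [Real.sqrt_sq (by positivity)]
  · intro hm4 hcs
    have hle := hcup _ _ hcs
    have h1L := hindex1 L (by rw [hLclass]; norm_num)
    have h1M := hindex1 M (by rw [hMclass]; dsimp only; norm_num)
    have hT := htensor L M; rw [hLclass, hMclass] at hT
    have hm4' : (4:ℤ) ≤ m := by exact_mod_cast hm4
    have h2T := hindex2 (T.tensor L M)
      (by rw [hT]; norm_num; nlinarith) (by rw [hT]; norm_num; nlinarith)
    rw [h1L.1, h1M.1, h2T.1, hLclass, hMclass, hT] at hle
    dsimp only at hle
    have e1 : (-(m:ℤ) * 0 - 1 ^ 2).natAbs = 1 := by norm_num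
    have e2 : ((1:ℤ) * -1 - 0 ^ 2).natAbs = 1 := by norm_num
    have e3 : ((-(m:ℤ) + 1) * (0 + -1) - (1 + 0) ^ 2).natAbs = m - 2 := by
      have : (-(m:ℤ) + 1) * (0 + -1) - (1 + 0) ^ 2 = ((m - 2 : ℕ) : ℤ) := by
        push_cast [Nat.cast_sub hm2]; ring
      rw [this, Int.natAbs_natCast]
    rw [e1, e2, e3] at hle
    omega
end
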